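/- Let p ≥ 5 be an integer. The white metallic tree splits into a sequence of copies of the black metallic tree: for every n ≥ 1 the level word L_n of the white tree equals the concatenation L'_n ++ L'_{n−1} ++ ⋯ ++ L'_1 ++ L_0, i.e. the level-n word of the white tree is the concatenation, for k = n down to 1, of the level-k words of the black tree, followed by the single letter W. -/

import Mathlib

/-- The two kinds of nodes of a metallic tree. -/
inductive Letter
  | B : Letter
  | W : Letter
deriving DecidableEq

/-- The generating rules: `B → B W^(p-4)` and `W → B W^(p-3)`. -/
def subst (p : ℕ) : Letter → List Letter
  | Letter.B => Letter.B :: List.replicate (p - 4) Letter.W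
  | Letter.W => Letter.B :: List.replicate (p - 3) Letter.W

/-- Level words of the white metallic tree (rooted at a white node). -/
def whiteLevel (p : ℕ) : ℕ → List Letter
  | 0 => [Letter.W]
  | n + 1 => (whiteLevel p n).flatMap (subst p)

/-- Level words of the black metallic tree (rooted at a black node). -/
def blackLevel (p : ℕ) : ℕ → List Letter
  | 0 => [Letter.B]
  | n + 1 => (blackLevel p n).flatMap (subst p)

lemma substW_eq (p : ℕ) (hp : 5 ≤ p) :
    subst p Letter.W = blackLevel p 1 ++ [Letter.W] := by
  have h : p - 3 = (p - 4) + 1 := by omega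
  simp [subst, blackLevel, h, (List.replicate_succ' : List.replicate (p - 4 + 1) Letter.W = _)]

lemma flat_step (p : ℕ) (l : List ℕ) :
    ((l.map (fun i => blackLevel p (i + 1))).flatten).flatMap (subst p)
      = (l.map (fun i => blackLevel p (i + 2))).flatten := by
  induction l with
  | nil => simp
  | cons a t ih =>
    simp only [List.map_cons, List.flatten_cons, List.flatMap_append, ih]
    congr 1

/-- for every `n ≥ 1`, the level-`n` word of the white metallic
tree is the concatenation, for `k = n` down to `1`, of the level-`k` words of
the black metallic tree, followed by the single letter `W`:
`L n = L' n ++ L' (n-1) ++ ⋯ ++ L' 1 ++ [W]`. -/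
theorem whiteLevel_splits_into_blackLevels (p : ℕ) (hp : 5 ≤ p) (n : ℕ) (hn : 1 ≤ n) :
    whiteLevel p n =
      ((List.range n).reverse.map (fun i => blackLevel p (i + 1))).flatten
        ++ [Letter.W] := by
  induction n with
  | zero => omega
  | succ m ih =>
    rcases Nat.eq_or_lt_of_le hn with h1 | h1
    · -- m = 0, n = 1
      have hm : m = 0 := by omega
      subst hm
      simp [whiteLevel, List.flatMap, substW_eq p hp, List.range_succ]
    · -- m ≥ 1
      have hm : 1 ≤ m := by omega
      have IH := ih hm
      show (whiteLevel p m).flatMap (subst p) = _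
      rw [IH, List.flatMap_append, flat_step]
      have : [Letter.W].flatMap (subst p) = blackLevel p 1 ++ [Letter.W] := by
        simp [substW_eq p hp]
      rw [this]
      rw [List.range_succ_eq_map]
      simp only [List.reverse_cons, List.map_reverse, List.map_map, List.map_append,
        List.flatten_append, List.map_cons, List.map_nil, List.flatten_cons,
        List.flatten_nil, List.append_nil, Function.comp]
      rw [List.append_assoc]
      congr 2
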